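/- Let X, Y ∈ S^n_{++}, y ∈ ℝ^m, τ, κ > 0, σ ∈ ℝ, and set μ = (Tr(XY) + τκ)/(n+1), r_i = Tr(A_i X) − b_i τ, s = ∑_{i=1}^m y_i A_i + Y, γ = κ − b^T y. Suppose (ΔX, Δy, ΔY, Δτ, Δκ) ∈ S^n × ℝ^m × S^n × ℝ × ℝ satisfies the dual-HKM system: Y^{1/2}(XΔY + ΔX Y)Y^{−1/2} + Y^{−1/2}(ΔY X + Y ΔX)Y^{1/2} = 2(σμ I − Y^{1/2} X Y^{1/2}); κΔτ + τΔκ = σμ − τκ; Tr(A_i ΔX) − b_i Δτ = −r_i for all i; ∑ Δy_i A_i + ΔY = −s; Δκ − b^T Δy = −γ. Put X̂ = diag(X, τ), Ŷ = diag(Y, κ), ΔX̂ = diag(ΔX, Δτ), ΔŶ = diag(ΔY, Δκ), and μ̂ = Tr(X̂Ŷ)/(n+1). Then μ̂ = μ and: Ŷ^{1/2}(X̂ΔŶ + ΔX̂ Ŷ)Ŷ^{−1/2} + Ŷ^{−1/2}(ΔŶ X̂ + Ŷ ΔX̂)Ŷ^{1/2} = 2(σμ̂ I − Ŷ^{1/2}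 X̂ Ŷ^{1/2}), and Â(ΔX̂) + B̂(ΔŶ) = −(Â(X̂) + B̂(Ŷ)). -/

import Mathlib

open Matrix BigOperators

noncomputable section

/-- Real square matrices of size `k`. -/
abbrev Mat (k : ℕ) : Type := Matrix (Fin k) (Fin k) ℝ

/-- `dgE P q` is the block-diagonal `(n+1) × (n+1)` matrix `diag(P, q)`. -/
def dgE {n : ℕ} (P : Mat n) (q : ℝ) : Mat (n + 1) :=
  Matrix.of fun i j =>
    if hi : (i : ℕ) < n then
      (if hj : (j : ℕ) < n then P ⟨i, hi⟩ ⟨j, hj⟩ else 0)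
    else (if (j : ℕ) < n then 0 else q)

/-- Index type for `ℝ^{ñ₁}`, split as the first `m` coordinates, the next `n`
coordinates, and the last `ñ+1−m` (here `k`) coordinates; `ñ₁ = m + n + (ñ+1−m)`. -/
abbrev SIdx (n m k : ℕ) : Type := Fin m ⊕ Fin n ⊕ Fin k

/-- The linear map `Â : S^{n+1} → ℝ^{ñ₁}` of the sSDLCP. -/
def Ahat {n m k : ℕ} (A : Fin m → Mat n) (b : Fin m → ℝ) (Xh : Mat (n + 1)) :
    SIdx n m k → ℝ
  | Sum.inl i => (dgE (A i) (-(b i)) * Xh).trace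
  | Sum.inr (Sum.inl i) => Xh i.castSucc (Fin.last n)
  | Sum.inr (Sum.inr _) => 0

/-- The linear map `B̂ : S^{n+1} → ℝ^{ñ₁}` of the sSDLCP, where `dd` is the vector `d`. -/
def Bhat {n m k : ℕ} (B : Fin k → Mat n) (dd : Fin k → ℝ) (Yh : Mat (n + 1)) :
    SIdx n m k → ℝ
  | Sum.inl _ => 0
  | Sum.inr (Sum.inl _) => 0
  | Sum.inr (Sum.inr j) => (dgE (B j) (dd j) * Yh).trace


open Classical in
/-- `psqrt M` is the (unique) positive semidefinite square root of `M` when `M` is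
positive semidefinite, and the junk value `0` otherwise.  For positive definite `M`
this is the unique positive definite square root `M^{1/2}`. -/
def psqrt {k : ℕ} (M : Mat k) : Mat k :=
  if h : M.PosSemidef then
    h.1.eigenvectorUnitary.1 * diagonal ((↑) ∘ (√·) ∘ h.1.eigenvalues) *
      (star h.1.eigenvectorUnitary : Mat k)
  else 0

variable {n : ℕ}

lemma dgE_submatrix (P : Mat n) (q : ℝ) :
    (dgE P q).submatrix finSumFinEquiv finSumFinEquiv
      = Matrix.fromBlocks P 0 0 (Matrix.diagonal fun _ : Fin 1 => q) := by
  ext a b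
  rcases a with i | i <;> rcases b with j | j <;>
    simp [dgE, finSumFinEquiv_apply_left, finSumFinEquiv_apply_right, Fin.fin_one_eq_zero]

lemma dgE_eq (P : Mat n) (q : ℝ) :
    dgE P q = (Matrix.fromBlocks P 0 0 (Matrix.diagonal fun _ : Fin 1 => q)).submatrix
      finSumFinEquiv.symm finSumFinEquiv.symm := by
  rw [← dgE_submatrix]
  ext i j
  simp

lemma dgE_mul (P R : Mat n) (q s : ℝ) : dgE P q * dgE R s = dgE (P * R) (q * s) := by
  rw [dgE_eq P q, dgE_eq R s, dgE_eq (P * R), submatrix_mul_equiv]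
  congr 1
  rw [Matrix.fromBlocks_multiply]
  simp [Matrix.diagonal_mul_diagonal]

lemma dgE_trace (P : Mat n) (q : ℝ) : (dgE P q).trace = P.trace + q := by
  simp only [Matrix.trace, Matrix.diag]
  rw [Fin.sum_univ_castSucc]
  congr 1
  · exact Finset.sum_congr rfl fun i _ => by simp [dgE, i.is_lt]
  · simp [dgE]

lemma dgE_add (P R : Mat n) (q s : ℝ) : dgE P q + dgE R s = dgE (P + R) (q + s) := by
  ext i j
  simp only [Matrix.add_apply, dgE, Matrix.of_apply]
  split_ifs <;> simp

lemma dgE_sub (P R : Mat n) (q s : ℝ) : dgE P q - dgE R s = dgE (P - R) (q - s) := by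
  ext i j
  simp only [Matrix.sub_apply, dgE, Matrix.of_apply]
  split_ifs <;> simp

lemma dgE_smul (r : ℝ) (P : Mat n) (q : ℝ) : r • dgE P q = dgE (r • P) (r * q) := by
  ext i j
  simp only [Matrix.smul_apply, dgE, Matrix.of_apply]
  split_ifs <;> simp

lemma dgE_one : dgE (1 : Mat n) 1 = (1 : Mat (n + 1)) := by
  ext i j
  simp only [dgE, Matrix.of_apply, Matrix.one_apply]
  simp only [Fin.ext_iff]
  split_ifs <;> simp_all <;> omega

lemma dgE_congr {P R : Mat n} {q s : ℝ} (h1 : P = R) (h2 : q = s) : dgE P q = dgE R s := by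
  rw [h1, h2]

lemma dgE_apply_last (P : Mat n) (q : ℝ) (i : Fin n) :
    dgE P q i.castSucc (Fin.last n) = 0 := by
  simp [dgE, i.is_lt]

lemma dgE_posSemidef {P : Mat n} {q : ℝ} (hP : P.PosSemidef) (hq : 0 < q) :
    (dgE P q).PosSemidef := by
  rw [dgE_eq]
  refine (Matrix.posSemidef_submatrix_equiv finSumFinEquiv.symm).mpr ?_
  have hD : (Matrix.diagonal fun _ : Fin 1 => q).PosDef :=
    Matrix.posDef_diagonal_iff.mpr fun _ => hq
  haveI := hD.isUnit.invertible
  have := Matrix.PosDef.fromBlocks₂₂ P (0 : Matrix (Fin n) (Fin 1) ℝ) hD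
  rw [show (0 : Matrix (Fin n) (Fin 1) ℝ)ᴴ = 0 by simp] at this
  rw [this]
  simpa using hP

open scoped MatrixOrder in
lemma psqrt_spec {k : ℕ} {M : Mat k} (h : M.PosSemidef) : psqrt M = CFC.sqrt M := by
  rw [CFC.sqrt_eq_cfc, cfc_nnreal_eq_real _ M, h.1.cfc_eq]
  simp only [psqrt, h, dite_true, IsHermitian.cfc, Unitary.conjStarAlgAut_apply]
  congr 3
  funext x
  simp only [Function.comp_apply, RCLike.ofReal_real_eq_id, id, Real.coe_sqrt, Real.coe_toNNReal']
  rcases le_total (h.1.eigenvalues x) 0 with hx | hx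
  · rw [max_eq_right hx, Real.sqrt_zero, Real.sqrt_eq_zero_of_nonpos hx]
  · rw [max_eq_left hx]

open scoped MatrixOrder in
lemma psqrt_mul_self {k : ℕ} {M : Mat k} (h : M.PosSemidef) : psqrt M * psqrt M = M := by
  rw [psqrt_spec h]; exact CFC.sqrt_mul_sqrt_self M h.nonneg

open scoped MatrixOrder in
lemma psqrt_posSemidef {k : ℕ} {M : Mat k} (h : M.PosSemidef) : (psqrt M).PosSemidef := by
  rw [psqrt_spec h]; exact (CFC.sqrt_nonneg M).posSemidef

open scoped MatrixOrder in
lemma psqrt_dgE {Y : Mat n} {κ : ℝ} (hY : Y.PosDef) (hκ : 0 < κ) :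
    psqrt (dgE Y κ) = dgE (psqrt Y) (Real.sqrt κ) := by
  have hpsd : (dgE (psqrt Y) (Real.sqrt κ)).PosSemidef :=
    dgE_posSemidef (psqrt_posSemidef hY.posSemidef) (Real.sqrt_pos.mpr hκ)
  have hsq : dgE (psqrt Y) (Real.sqrt κ) ^ 2 = dgE Y κ := by
    rw [pow_two, dgE_mul, psqrt_mul_self hY.posSemidef, Real.mul_self_sqrt hκ.le]
  have h2 : (dgE Y κ).PosSemidef := hsq ▸ (hpsd.pow 2)
  rw [psqrt_spec h2]
  exact CFC.sqrt_unique (by rw [← pow_two]; exact hsq) hpsd.nonneg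

lemma psqrt_det_isUnit {k : ℕ} {M : Mat k} (h : M.PosDef) : IsUnit (psqrt M).det := by
  have : (psqrt M).det * (psqrt M).det = M.det := by
    rw [← Matrix.det_mul, psqrt_mul_self h.posSemidef]
  refine isUnit_iff_ne_zero.mpr fun h0 => ?_
  rw [h0, mul_zero] at this
  exact h.det_pos.ne' this.symm

lemma dgE_inv {P : Mat n} {q : ℝ} (hP : IsUnit P.det) (hq : q ≠ 0) :
    (dgE P q)⁻¹ = dgE P⁻¹ q⁻¹ := by
  apply Matrix.inv_eq_right_inv
  rw [dgE_mul, Matrix.mul_nonsing_inv _ hP, mul_inv_cancel₀ hq, dgE_one]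


/-- A solution of the dual-HKM predictor system for the homogeneous
feasibility model yields, via block-diagonal embedding, a solution of the corresponding
system for the sSDLCP, with residual `−(Â(X̂) + B̂(Ŷ))`, and the duality measures agree.
(Here `ñ` is written `nt`; `B j` denotes `B_{j+1}`, so `B 0 = B₁`, `d = (d₁, 0, …, 0)`,
and `psqrt M` is the positive definite square root `M^{1/2}` of a positive definite
matrix `M`, with `(psqrt M)⁻¹ = M^{−1/2}`.) -/
theorem dual_HKM_system_transfers_to_sSDLCP
    (n m nt : ℕ) (hm1 : 1 ≤ m) (hmn : m ≤ nt) (hnt : nt = n * (n + 1) / 2)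
    (A : Fin m → Mat n) (b : Fin m → ℝ)
    (B : Fin (nt - m + 1) → Mat n) (d1 : ℝ)
    (hAsymm : ∀ i, (A i).IsSymm) (hAli : LinearIndependent ℝ A)
    (hBsymm : ∀ j, (B j).IsSymm)
    (hd1 : d1 ≠ 0)
    (hB1A : ∀ i, -(d1 * b i) + (B 0 * A i).trace = 0)
    (hBli : LinearIndependent ℝ (fun j : {j : Fin (nt - m + 1) // j ≠ 0} => B j.1))
    (hBspan : ∀ W : Mat n,
        W ∈ Submodule.span ℝ (B '' {j | j ≠ 0}) ↔
          (W.IsSymm ∧ ∀ i, (W * A i).trace = 0))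
    (X Y ΔX ΔY : Mat n) (y Δy : Fin m → ℝ) (τ κ Δτ Δκ σ μ : ℝ)
    (hX : X.PosDef) (hY : Y.PosDef) (hτ : 0 < τ) (hκ : 0 < κ)
    (hΔX : ΔX.IsSymm) (hΔY : ΔY.IsSymm)
    (hμ : μ = ((X * Y).trace + τ * κ) / ((n : ℝ) + 1))
    (heq1 : psqrt Y * (X * ΔY + ΔX * Y) * (psqrt Y)⁻¹
          + (psqrt Y)⁻¹ * (ΔY * X + Y * ΔX) * psqrt Y
        = (2 : ℝ) • ((σ * μ) • (1 : Mat n) - psqrt Y * X * psqrt Y))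
    (heq2 : κ * Δτ + τ * Δκ = σ * μ - τ * κ)
    (heq3 : ∀ i, (A i * ΔX).trace - b i * Δτ = -((A i * X).trace - b i * τ))
    (heq4 : (∑ i, Δy i • A i) + ΔY = -((∑ i, y i • A i) + Y))
    (heq5 : Δκ - (∑ i, b i * Δy i) = -(κ - ∑ i, b i * y i)) :
    (dgE X τ * dgE Y κ).trace / ((n : ℝ) + 1) = μ ∧
    (psqrt (dgE Y κ) * (dgE X τ * dgE ΔY Δκ + dgE ΔX Δτ * dgE Y κ) * (psqrt (dgE Y κ))⁻¹
        + (psqrt (dgE Y κ))⁻¹ * (dgE ΔY Δκ * dgE X τ + dgE Y κ * dgE ΔX Δτ) * psqrt (dgE Y κ)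
      = (2 : ℝ) • ((σ * ((dgE X τ * dgE Y κ).trace / ((n : ℝ) + 1))) • (1 : Mat (n + 1))
          - psqrt (dgE Y κ) * dgE X τ * psqrt (dgE Y κ))) ∧
    (∀ idx, Ahat A b (dgE ΔX Δτ) idx +
        Bhat B (fun j => if j = 0 then d1 else 0) (dgE ΔY Δκ) idx
      = -(Ahat A b (dgE X τ) idx +
          Bhat B (fun j => if j = 0 then d1 else 0) (dgE Y κ) idx)) := by
  have hκ' : 0 < Real.sqrt κ := Real.sqrt_pos.mpr hκ
  set c := Real.sqrt κ with hcdef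
  have hcc : c * c = κ := Real.mul_self_sqrt hκ.le
  have hc0 : c ≠ 0 := ne_of_gt hκ'
  have hdet : IsUnit (psqrt Y).det := psqrt_det_isUnit hY
  have hTr : (dgE X τ * dgE Y κ).trace = (X * Y).trace + τ * κ := by
    rw [dgE_mul, dgE_trace]
  have hμ' : (dgE X τ * dgE Y κ).trace / ((n : ℝ) + 1) = μ := by
    rw [hTr, hμ]
  -- linear combination fact
  have hYsum : ΔY + Y = -(∑ i, (Δy i + y i) • A i) := by
    have h1 : ΔY = -((∑ i, y i • A i) + Y) - ∑ i, Δy i • A i := by rw [← heq4]; abel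
    rw [h1, show (∑ i, (Δy i + y i) • A i) = (∑ i, Δy i • A i) + ∑ i, y i • A i from by
      rw [← Finset.sum_add_distrib]; exact Finset.sum_congr rfl fun i _ => add_smul _ _ _]
    abel
  have key : ∀ W : Mat n,
      (W * ΔY).trace + (W * Y).trace = -∑ i, (Δy i + y i) * (W * A i).trace := by
    intro W
    have h2 : (W * (ΔY + Y)).trace = (W * ΔY).trace + (W * Y).trace := by
      rw [mul_add, Matrix.trace_add]
    rw [← h2, hYsum, mul_neg, Matrix.trace_neg, Matrix.mul_sum, Matrix.trace_sum]
    congr 1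
    exact Finset.sum_congr rfl fun i _ => by rw [Matrix.mul_smul, Matrix.trace_smul, smul_eq_mul]
  refine ⟨hμ', ?_, ?_⟩
  · rw [hμ', psqrt_dgE hY hκ, dgE_inv hdet hc0,
      show (1 : Mat (n + 1)) = dgE 1 1 from dgE_one.symm]
    simp only [dgE_mul, dgE_add, dgE_smul, dgE_sub]
    refine dgE_congr heq1 ?_
    have h1 : c * (τ * Δκ + Δτ * κ) * c⁻¹ = τ * Δκ + Δτ * κ := by field_simp
    have h2 : c⁻¹ * (Δκ * τ + κ * Δτ) * c = Δκ * τ + κ * Δτ := by field_simp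
    have h3 : c * τ * c = τ * κ := by rw [mul_comm c τ, mul_assoc, hcc]
    rw [h1, h2, h3]
    nlinarith [heq2]
  · rintro (i | i | j)
    · simp only [Ahat, Bhat, dgE_mul, dgE_trace, add_zero]
      have := heq3 i
      linarith
    · simp only [Ahat, Bhat, dgE_apply_last, add_zero]
      norm_num
    · simp only [Ahat, Bhat, dgE_mul, dgE_trace, zero_add]
      by_cases hj : j = 0
      · subst hj
        simp only [if_pos rfl, if_true]
        have hB1A' : ∀ i, (B 0 * A i).trace = d1 * b i := fun i => by linarith [hB1A i]
        have e1 := key (B 0)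
        have e2 : ∑ i, (Δy i + y i) * (B 0 * A i).trace = d1 * Δκ + d1 * κ := by
          have h5 : Δκ + κ = ∑ i, b i * (Δy i + y i) := by
            have : ∑ i, b i * (Δy i + y i) = (∑ i, b i * Δy i) + ∑ i, b i * y i := by
              rw [← Finset.sum_add_distrib]
              exact Finset.sum_congr rfl fun i _ => mul_add _ _ _
            rw [this]; linarith [heq5]
          have h6 : ∑ i, (Δy i + y i) * (B 0 * A i).trace
              = d1 * ∑ i, b i * (Δy i + y i) := by
            rw [Finset.mul_sum]
            exact Finset.sum_congr rfl fun i _ => by rw [hB1A' i]; ring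
          rw [h6, ← h5]; ring
        linarith
      · simp only [if_neg hj]
        have hmem : B j ∈ Submodule.span ℝ (B '' {j' | j' ≠ 0}) :=
          Submodule.subset_span ⟨j, hj, rfl⟩
        have h0 : ∀ i, (B j * A i).trace = 0 := ((hBspan (B j)).mp hmem).2
        have e1 := key (B j)
        simp only [h0, mul_zero, Finset.sum_const_zero, neg_zero] at e1
        linarith

end
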